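/- For all integers n ≥ 2 and k ≥ 2 with F_k ≤ n < F_{k+1}, the least natural number m such that a(m) ≥ n equals F_k + 1; that is, a(F_k + 1) ≥ n and a(i) < n for all i < F_k + 1. -/

import Mathlib

/-- The sequence A105774: `a n = n` for `n ≤ 1`, and
`a n = fib (j+1) - a (n - fib j)` where `j ≥ 2` is the unique index
with `fib j < n ≤ fib (j+1)` (realized as the greatest `j ≤ n` with `fib j < n`). -/
def a (n : ℕ) : ℕ :=
  if _h : n ≤ 1 then n
  else
    Nat.fib (Nat.findGreatest (fun j => Nat.fib j < n) n + 1) -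
      a (n - Nat.fib (Nat.findGreatest (fun j => Nat.fib j < n) n))
decreasing_by
  have h2 : 2 ≤ n := by omega
  have hj : 2 ≤ Nat.findGreatest (fun j => Nat.fib j < n) n :=
    Nat.le_findGreatest h2 (by show Nat.fib 2 < n; simp [Nat.fib_two]; omega)
  have hpos : 0 < Nat.fib (Nat.findGreatest (fun j => Nat.fib j < n) n) :=
    Nat.fib_pos.mpr (by omega)
  omega

/-!
On `1 ≤ m ≤ F_j` (`j ≥ 3`) the sequence satisfies `1 ≤ a m < F_j`: if `F_i < m ≤ F_{i+1}` then
`a m = F_{i+1} - a (m - F_i)` with `F_{i+1} ≤ F_j` and a positive subtracted term, so the two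
bounds follow together by strong induction. Hence for `k ≥ 3` every `a i` with `i ≤ F_k` lies
below `F_k ≤ n` (for `k = 2` only `a 0, a 1 ≤ 1` occur), while `a (F_k + 1) = F_{k+1} - a 1 = F_{k+1} - 1 ≥ n`.
-/

open Nat

lemma a_of_le_one {m : ℕ} (hm : m ≤ 1) : a m = m := by
  rw [a, dif_pos hm]

lemma exists_fib_lt_le_fib_succ {m : ℕ} (hm : 2 ≤ m) :
    ∃ j, 2 ≤ j ∧ fib j < m ∧ m ≤ fib (j + 1) := by
  refine ⟨greatestFib (m - 1), le_greatestFib.2 (by rw [fib_two]; omega), ?_, ?_⟩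
  · have := fib_greatestFib_le (m - 1)
    omega
  · have := lt_fib_greatestFib_add_one (m - 1)
    omega

lemma a_eq_fib_succ_sub {m j : ℕ} (hj : 2 ≤ j) (hl : fib j < m) (hu : m ≤ fib (j + 1)) :
    a m = fib (j + 1) - a (m - fib j) := by
  have hfib : 0 < fib j := fib_pos.2 (by omega)
  have hindex : findGreatest (fun i => fib i < m) m = j := by
    refine findGreatest_eq_iff.2 ⟨(le_fib_add_one j).trans hl, fun _ => hl, fun i hji _ => ?_⟩
    exact not_lt.2 (hu.trans (fib_mono hji))
  rw [a, dif_neg (by omega), hindex]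

mutual

theorem a_pos {m : ℕ} (hm : 0 < m) : 0 < a m := by
  rcases le_or_gt m 1 with hm1 | hm2
  · rw [a_of_le_one hm1]
    exact hm
  · obtain ⟨i, hi, hl, hu⟩ := exists_fib_lt_le_fib_succ hm2
    have hfib : 0 < fib i := fib_pos.2 (by omega)
    have hrest : a (m - fib i) < fib (i + 1) := a_lt_fib (by omega) (by omega)
    rw [a_eq_fib_succ_sub hi hl hu]
    omega
termination_by m

theorem a_lt_fib {m j : ℕ} (hj : 3 ≤ j) (hm : m ≤ fib j) : a m < fib j := by
  rcases le_or_gt m 1 with hm1 | hm2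
  · have : 2 ≤ fib j := fib_mono hj
    rw [a_of_le_one hm1]
    omega
  · obtain ⟨i, hi, hl, hu⟩ := exists_fib_lt_le_fib_succ hm2
    have hfib : 0 < fib i := fib_pos.2 (by omega)
    have hij : fib (i + 1) ≤ fib j := fib_mono <| by
      by_contra! hji
      have : fib j ≤ fib i := fib_mono (by omega)
      omega
    have hrest : 0 < a (m - fib i) := a_pos (by omega)
    rw [a_eq_fib_succ_sub hi hl hu]
    omega
termination_by m

end

/-- For `n ≥ 2` with `F k ≤ n < F (k+1)` (`k ≥ 2`), the least `m` with
`a m ≥ n` is `F k + 1`: `a (F k + 1) ≥ n` and `a i < n` for all `i < F k + 1`. -/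
theorem a105774_least_reaching (n k : ℕ) (hn : 2 ≤ n) (hk : 2 ≤ k)
    (h1 : Nat.fib k ≤ n) (h2 : n < Nat.fib (k + 1)) :
    n ≤ a (Nat.fib k + 1) ∧ ∀ i : ℕ, i < Nat.fib k + 1 → a i < n := by
  refine ⟨?_, fun i hi => ?_⟩
  · rw [a_eq_fib_succ_sub hk (lt_add_one _) (fib_lt_fib_succ hk), Nat.add_sub_cancel_left,
      a_of_le_one le_rfl]
    omega
  · obtain rfl | hk3 := hk.eq_or_lt
    · rw [fib_two] at hi
      rw [a_of_le_one (by omega)]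
      omega
    · exact (a_lt_fib hk3 (by omega)).trans_le h1
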